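/- Correlation-connectivity identity: for the 2-state Potts model at inverse temperature 2β with field h on a finite graph G=(V,E) and distinct x,y ∈ V, τ_{2β,h,2,V}(x,y) = (1/2) φ_{p,h,G}(x ↔ y) + (1/2) φ_{p,h,G}( 1_{{x ↮ y}} · tanh(h(K_t)) · tanh(h(K_u)) ), where τ(x,y) = π_{2β,h,2,V}(σ̂_x = σ̂_y) - 1/2, K_t and K_u are the (random) connected components of x and y, and h(K) = β Σ_{i∈K} h_i. -/

import Mathlib

open Finset

noncomputable section

variable {V : Type}

/-- The spin value (±1) attached to a Boolean spin (`true ↔ +1`, `false ↔ -1`). -/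
def spin (b : Bool) : ℝ := if b then 1 else -1

/-- The subgraph of `G` whose open edges are the edges in `F`. -/
def openSub (G : SimpleGraph V) (F : Finset (Sym2 V)) : SimpleGraph V where
  Adj i j := G.Adj i j ∧ s(i, j) ∈ F
  symm := by
    constructor
    intro i j h
    exact ⟨h.1.symm, by rw [Sym2.eq_swap]; exact h.2⟩
  loopless := ⟨fun i h => G.irrefl h.1⟩

instance [Fintype V] (H : SimpleGraph V) : Fintype H.ConnectedComponent := by
  classical exact Fintype.ofSurjective H.connectedComponentMk Quot.exists_rep

/-- The vertex set of a connected component, as a `Finset`. -/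
def compSupp [Fintype V] (H : SimpleGraph V) (c : H.ConnectedComponent) : Finset V := by
  classical exact Finset.univ.filter fun v => H.connectedComponentMk v = c

/-- Kronecker delta `δ_{σ_i,σ_j}` of a configuration on an (unordered) edge. -/
def eDelta {S : Type} [DecidableEq S] (σ : V → S) : Sym2 V → ℝ :=
  Sym2.lift ⟨fun i j => if σ i = σ j then 1 else 0, fun _ _ => by simp [eq_comm]⟩

/-- Product of spins `σ_i σ_j` on an (unordered) edge. -/
def eProd (σ : V → Bool) : Sym2 V → ℝ :=
  Sym2.lift ⟨fun i j => spin (σ i) * spin (σ j), fun _ _ => mul_comm _ _⟩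

/-- The consistency indicator `Δ(σ,ω)`: equal to `1` iff `σ` is constant on
every open edge of the configuration `F`. -/
def Delta (G : SimpleGraph V) (F : Finset (Sym2 V)) (σ : V → Bool) : ℝ := by
  classical exact if ∀ i j, G.Adj i j → s(i, j) ∈ F → σ i = σ j then 1 else 0

/-- The Bernoulli factor `B_J(ω) = ∏_{e open} p_e ∏_{e closed} (1-p_e)`. -/
def bern [Fintype V] [DecidableEq V] (G : SimpleGraph V) [DecidableRel G.Adj]
    (p : Sym2 V → ℝ) (F : Finset (Sym2 V)) : ℝ :=
  (∏ e ∈ F, p e) * ∏ e ∈ G.edgeFinset \ F, (1 - p e)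

/-- The (unnormalized) 2-state Potts Boltzmann weight at inverse temperature
`2β`, with states `Fin 2` (`0 ↔` state `1`, `1 ↔` state `2`). -/
def pottsW2 [Fintype V] [DecidableEq V] (G : SimpleGraph V) [DecidableRel G.Adj]
    (β : ℝ) (J : Sym2 V → ℝ) (h : V → ℝ) (τ : V → Fin 2) : ℝ :=
  Real.exp (-(2 * β) *
    (-(∑ e ∈ G.edgeFinset, J e * eDelta τ e)
      - ∑ i, h i / 2 * ((if τ i = 0 then (1 : ℝ) else 0) - if τ i = 1 then 1 else 0)))

/-- The random-cluster weight `B_J(ω) ∏_α 2cosh(β Σ_{i∈K_α} h_i)`. -/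
def rcW [Fintype V] [DecidableEq V] (G : SimpleGraph V) [DecidableRel G.Adj]
    (β : ℝ) (p : Sym2 V → ℝ) (h : V → ℝ) (F : Finset (Sym2 V)) : ℝ :=
  bern G p F * ∏ c : (openSub G F).ConnectedComponent,
    2 * Real.cosh (β * ∑ i ∈ compSupp (openSub G F) c, h i)

/-- Expectation of `f` under the random-cluster measure with external field. -/
def rcE [Fintype V] [DecidableEq V] (G : SimpleGraph V) [DecidableRel G.Adj]
    (β : ℝ) (p : Sym2 V → ℝ) (h : V → ℝ) (f : Finset (Sym2 V) → ℝ) : ℝ :=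
  (∑ F ∈ G.edgeFinset.powerset, f F * rcW G β p h F) /
    ∑ F ∈ G.edgeFinset.powerset, rcW G β p h F

/-- `h(K_z) = β Σ_{i ∈ K_z} h_i`, where `K_z` is the connected component of `z`
in the configuration `F`. -/
def hK [Fintype V] [DecidableEq V] (G : SimpleGraph V) (β : ℝ) (h : V → ℝ)
    (F : Finset (Sym2 V)) (z : V) : ℝ :=
  β * ∑ i ∈ compSupp (openSub G F) ((openSub G F).connectedComponentMk z), h i

/-! Edwards–Sokal coupling. Reading the Potts states as Ising spins `±1`, the indicator of
`σ x = σ y` is `(1 + σ_x σ_y) / 2`, so it suffices to compute `⟨σ_x σ_y⟩`. Writing each edge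
factor `exp (2βJ δ)` as `exp (2βJ) (p δ + 1 - p)` and expanding the product over edges turns
the Ising weight into a sum over edge configurations `ω` of `B_J(ω)` times the indicator that
`σ` is constant on the clusters of `ω`. For fixed `ω` the cluster spins are independent with
weights `exp (± h(K))`: summing them out produces the factor `∏ 2 cosh h(K)` of the
random-cluster weight, and the mean of `σ_x σ_y` is `1` when `x ↔ y` and
`tanh h(K_x) · tanh h(K_y)` otherwise. -/

section Spins

lemma spin_mul_self (b : Bool) : spin b * spin b = 1 := by
  cases b <;> norm_num [spin]

lemma sum_exp_spin_mul (w : ℝ) : ∑ b : Bool, Real.exp (spin b * w) = 2 * Real.cosh w := by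
  simp only [Fintype.sum_bool, spin, if_true, Bool.false_eq_true, if_false, Real.cosh_eq]
  ring_nf

lemma sum_spin_mul_exp_spin_mul (w : ℝ) :
    ∑ b : Bool, spin b * Real.exp (spin b * w) = 2 * Real.sinh w := by
  simp only [Fintype.sum_bool, spin, if_true, Bool.false_eq_true, if_false, Real.sinh_eq]
  ring_nf

variable {C : Type*} [Fintype C] [DecidableEq C]

/-- Under the product measure `∏ exp (±w c)` the spins are independent with mean `tanh (w c)`. -/
lemma sum_prod_spin_mul_prod_exp (w : C → ℝ) (S : Finset C) :
    ∑ ε : C → Bool, (∏ c ∈ S, spin (ε c)) * ∏ c, Real.exp (spin (ε c) * w c)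
      = (∏ c ∈ S, Real.tanh (w c)) * ∏ c, 2 * Real.cosh (w c) := by
  have factor (c : C) : ∑ b : Bool, (if c ∈ S then spin b else 1) * Real.exp (spin b * w c)
      = (if c ∈ S then Real.tanh (w c) else 1) * (2 * Real.cosh (w c)) := by
    split_ifs
    · rw [sum_spin_mul_exp_spin_mul, Real.tanh_eq_sinh_div_cosh]
      field_simp [(Real.cosh_pos (w c)).ne']
    · simp only [one_mul, sum_exp_spin_mul]
  calc ∑ ε : C → Bool, (∏ c ∈ S, spin (ε c)) * ∏ c, Real.exp (spin (ε c) * w c)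
      = ∑ ε : C → Bool, ∏ c, (if c ∈ S then spin (ε c) else 1) * Real.exp (spin (ε c) * w c) := by
        simp only [Finset.prod_mul_distrib, Finset.prod_ite_mem, Finset.univ_inter]
    _ = ∏ c, ∑ b : Bool, (if c ∈ S then spin b else 1) * Real.exp (spin b * w c) :=
        (Fintype.prod_sum fun c b => (if c ∈ S then spin b else 1) * Real.exp (spin b * w c)).symm
    _ = (∏ c ∈ S, Real.tanh (w c)) * ∏ c, 2 * Real.cosh (w c) := by
        simp only [factor, Finset.prod_mul_distrib, Finset.prod_ite_mem, Finset.univ_inter]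

lemma sum_prod_exp_spin_mul (w : C → ℝ) :
    ∑ ε : C → Bool, ∏ c, Real.exp (spin (ε c) * w c) = ∏ c, 2 * Real.cosh (w c) := by
  simpa using sum_prod_spin_mul_prod_exp w ∅

lemma sum_spin_mul_spin_mul_prod_exp (w : C → ℝ) (a b : C) :
    ∑ ε : C → Bool, spin (ε a) * spin (ε b) * ∏ c, Real.exp (spin (ε c) * w c)
      = (if a = b then 1 else Real.tanh (w a) * Real.tanh (w b)) * ∏ c, 2 * Real.cosh (w c) := by
  split_ifs with hab
  · subst hab
    simp only [spin_mul_self, one_mul, sum_prod_exp_spin_mul]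
  · simpa [Finset.prod_pair hab] using sum_prod_spin_mul_prod_exp w {a, b}

end Spins

section Components

open scoped Classical

lemma apply_eq_of_reachable {H : SimpleGraph V} {σ : V → Bool} (hσ : ∀ i j, H.Adj i j → σ i = σ j)
    {v w : V} (hvw : H.Reachable v w) : σ v = σ w := by
  obtain ⟨q⟩ := hvw
  induction q with
  | nil => rfl
  | cons hadj _ ih => exact (hσ _ _ hadj).trans ih

variable [Fintype V] (H : SimpleGraph V)

lemma exp_field_eq_prod_connectedComponent (β : ℝ) (h : V → ℝ) (ε : H.ConnectedComponent → Bool) :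
    Real.exp (β * ∑ i, h i * spin (ε (H.connectedComponentMk i)))
      = ∏ c, Real.exp (spin (ε c) * (β * ∑ i ∈ compSupp H c, h i)) := by
  rw [← Real.exp_sum]
  congr 1
  rw [← Finset.sum_fiberwise Finset.univ H.connectedComponentMk, Finset.mul_sum]
  refine Finset.sum_congr rfl fun c _ => ?_
  rw [compSupp, Finset.mul_sum, Finset.mul_sum, Finset.mul_sum]
  refine Finset.sum_congr rfl fun i hi => ?_
  rw [(Finset.mem_filter.mp hi).2]
  ring

variable [DecidableEq V]

lemma sum_filter_adj_eq_sum_connectedComponent {M : Type*} [AddCommMonoid M]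
    (g : (V → Bool) → M) :
    ∑ σ : V → Bool with ∀ i j, H.Adj i j → σ i = σ j, g σ
      = ∑ ε : H.ConnectedComponent → Bool, g (fun v => ε (H.connectedComponentMk v)) := by
  refine Finset.sum_nbij' (fun σ c => σ c.out) (fun ε v => ε (H.connectedComponentMk v))
    (fun _ _ => Finset.mem_univ _) ?_ ?_ (fun ε _ => funext fun c => congrArg ε c.out_eq) ?_
  · intro ε _
    simp only [Finset.mem_filter, Finset.mem_univ, true_and]
    intro i j hadj
    rw [SimpleGraph.ConnectedComponent.connectedComponentMk_eq_of_adj hadj]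
  · intro σ hσ
    simp only [Finset.mem_filter, Finset.mem_univ, true_and] at hσ
    funext v
    exact apply_eq_of_reachable hσ
      (SimpleGraph.ConnectedComponent.exact (H.connectedComponentMk v).out_eq)
  · intro σ hσ
    simp only [Finset.mem_filter, Finset.mem_univ, true_and] at hσ
    congr 1
    funext v
    exact apply_eq_of_reachable hσ
      (SimpleGraph.ConnectedComponent.exact (H.connectedComponentMk v).out_eq).symm

lemma sum_filter_adj_exp_field (β : ℝ) (h : V → ℝ) :
    ∑ σ : V → Bool with ∀ i j, H.Adj i j → σ i = σ j, Real.exp (β * ∑ i, h i * spin (σ i))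
      = ∏ c, 2 * Real.cosh (β * ∑ i ∈ compSupp H c, h i) := by
  simp only [sum_filter_adj_eq_sum_connectedComponent, exp_field_eq_prod_connectedComponent,
    sum_prod_exp_spin_mul]

lemma sum_filter_adj_spin_mul_spin_mul_exp_field (β : ℝ) (h : V → ℝ) (x y : V) :
    ∑ σ : V → Bool with ∀ i j, H.Adj i j → σ i = σ j,
        spin (σ x) * spin (σ y) * Real.exp (β * ∑ i, h i * spin (σ i))
      = (if H.Reachable x y then 1 else
          Real.tanh (β * ∑ i ∈ compSupp H (H.connectedComponentMk x), h i) *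
            Real.tanh (β * ∑ i ∈ compSupp H (H.connectedComponentMk y), h i)) *
        ∏ c, 2 * Real.cosh (β * ∑ i ∈ compSupp H c, h i) := by
  simp only [sum_filter_adj_eq_sum_connectedComponent, exp_field_eq_prod_connectedComponent,
    sum_spin_mul_spin_mul_prod_exp, SimpleGraph.ConnectedComponent.eq]

end Components

section EdwardsSokal

lemma eDelta_mk {S : Type} [DecidableEq S] (σ : V → S) (i j : V) :
    eDelta σ s(i, j) = if σ i = σ j then 1 else 0 := rfl

open scoped Classical in
lemma Delta_eq_ite (G : SimpleGraph V) (F : Finset (Sym2 V)) (σ : V → Bool) :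
    Delta G F σ = if ∀ i j, (openSub G F).Adj i j → σ i = σ j then 1 else 0 := by
  simp only [Delta, openSub, and_imp]

lemma prod_eDelta_eq_Delta {G : SimpleGraph V} [Fintype V] [DecidableRel G.Adj]
    {F : Finset (Sym2 V)} (hF : F ⊆ G.edgeFinset) (σ : V → Bool) :
    ∏ e ∈ F, eDelta σ e = Delta G F σ := by
  by_cases hσ : ∀ i j, G.Adj i j → s(i, j) ∈ F → σ i = σ j
  · rw [Delta, if_pos hσ]
    refine Finset.prod_eq_one fun e he => ?_
    induction e using Sym2.ind with
    | _ i j => rw [eDelta_mk, if_pos (hσ i j (SimpleGraph.mem_edgeFinset.mp (hF he)) he)]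
  · rw [Delta, if_neg hσ]
    simp only [not_forall] at hσ
    obtain ⟨i, j, -, hij, hne⟩ := hσ
    exact Finset.prod_eq_zero hij (by rw [eDelta_mk, if_neg hne])

variable {β : ℝ} {J p : Sym2 V → ℝ}

/-- Each Potts edge factor is the mixture of an open edge (forcing `δ = 1`) with probability
`p e` and a closed edge with probability `1 - p e`. -/
lemma exp_mul_eDelta_eq (hp : ∀ e, p e = 1 - Real.exp (-(2 * β) * J e))
    (σ : V → Bool) (e : Sym2 V) :
    Real.exp (2 * β * (J e * eDelta σ e))
      = Real.exp (2 * β * J e) * (p e * eDelta σ e + (1 - p e)) := by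
  induction e using Sym2.ind with
  | _ i j =>
    rw [eDelta_mk, hp, sub_sub_cancel]
    split_ifs
    · ring_nf
    · rw [mul_zero, mul_zero, mul_zero, zero_add, ← Real.exp_add]
      ring_nf

variable [Fintype V] [DecidableEq V] (G : SimpleGraph V) [DecidableRel G.Adj]

lemma prod_exp_mul_eDelta_eq_sum (hp : ∀ e, p e = 1 - Real.exp (-(2 * β) * J e))
    (σ : V → Bool) :
    ∏ e ∈ G.edgeFinset, Real.exp (2 * β * (J e * eDelta σ e))
      = (∏ e ∈ G.edgeFinset, Real.exp (2 * β * J e)) *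
          ∑ F ∈ G.edgeFinset.powerset, bern G p F * Delta G F σ := by
  rw [Finset.prod_congr rfl fun e _ => exp_mul_eDelta_eq hp σ e, Finset.prod_mul_distrib,
    Finset.prod_add]
  congr 1
  refine Finset.sum_congr rfl fun F hF => ?_
  rw [Finset.prod_mul_distrib, prod_eDelta_eq_Delta (Finset.mem_powerset.mp hF), bern]
  ring

end EdwardsSokal

section Ising

variable [Fintype V] [DecidableEq V] (G : SimpleGraph V) [DecidableRel G.Adj]
  (β : ℝ) (J : Sym2 V → ℝ) (h : V → ℝ)

def isingWeight (σ : V → Bool) : ℝ :=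
  (∏ e ∈ G.edgeFinset, Real.exp (2 * β * (J e * eDelta σ e)))
    * Real.exp (β * ∑ i, h i * spin (σ i))

open scoped Classical in
lemma sum_mul_isingWeight_eq {p : Sym2 V → ℝ} (hp : ∀ e, p e = 1 - Real.exp (-(2 * β) * J e))
    (g : (V → Bool) → ℝ) :
    ∑ σ, g σ * isingWeight G β J h σ
      = (∏ e ∈ G.edgeFinset, Real.exp (2 * β * J e)) *
          ∑ F ∈ G.edgeFinset.powerset, bern G p F *
            ∑ σ : V → Bool with ∀ i j, (openSub G F).Adj i j → σ i = σ j,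
              g σ * Real.exp (β * ∑ i, h i * spin (σ i)) := by
  simp only [isingWeight, prod_exp_mul_eDelta_eq_sum G hp, Finset.mul_sum, Finset.sum_mul]
  rw [Finset.sum_comm]
  refine Finset.sum_congr rfl fun F _ => ?_
  rw [Finset.sum_filter]
  refine Finset.sum_congr rfl fun σ _ => ?_
  rw [Delta_eq_ite]
  split_ifs <;> ring

omit [DecidableEq V] in
lemma isingWeight_pos (σ : V → Bool) : 0 < isingWeight G β J h σ :=
  mul_pos (Finset.prod_pos fun _ _ => Real.exp_pos _) (Real.exp_pos _)

variable {β J h} {p : Sym2 V → ℝ}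

lemma sum_isingWeight_eq (hp : ∀ e, p e = 1 - Real.exp (-(2 * β) * J e)) :
    ∑ σ, isingWeight G β J h σ
      = (∏ e ∈ G.edgeFinset, Real.exp (2 * β * J e)) *
          ∑ F ∈ G.edgeFinset.powerset, rcW G β p h F := by
  have := sum_mul_isingWeight_eq G β J h hp fun _ => 1
  simp only [one_mul] at this
  simp only [this, sum_filter_adj_exp_field, rcW]

open scoped Classical in
lemma sum_spin_mul_spin_mul_isingWeight_eq (hp : ∀ e, p e = 1 - Real.exp (-(2 * β) * J e))
    (x y : V) :
    ∑ σ, spin (σ x) * spin (σ y) * isingWeight G β J h σ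
      = (∏ e ∈ G.edgeFinset, Real.exp (2 * β * J e)) *
          ∑ F ∈ G.edgeFinset.powerset,
            (if (openSub G F).Reachable x y then 1 else
              Real.tanh (hK G β h F x) * Real.tanh (hK G β h F y)) * rcW G β p h F := by
  rw [sum_mul_isingWeight_eq G β J h hp]
  congr 1
  refine Finset.sum_congr rfl fun F _ => ?_
  rw [sum_filter_adj_spin_mul_spin_mul_exp_field, rcW, hK, hK]
  ring

end Ising

section Potts

/-- Potts state `0` carries spin `+1` (`true`) and state `1` spin `-1`, matching the sign of the
field term in `pottsW2`. -/
def pottsStateEquiv : Fin 2 ≃ Bool where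
  toFun a := decide (a = 0)
  invFun b := if b then 0 else 1
  left_inv := by decide
  right_inv := by decide

lemma eDelta_pottsStateEquiv (τ : V → Fin 2) (e : Sym2 V) :
    eDelta (fun v => pottsStateEquiv (τ v)) e = eDelta τ e := by
  induction e using Sym2.ind with
  | _ i j => simp only [eDelta_mk, pottsStateEquiv.injective.eq_iff]

variable [Fintype V] [DecidableEq V] (G : SimpleGraph V) [DecidableRel G.Adj]
  (β : ℝ) (J : Sym2 V → ℝ) (h : V → ℝ)

lemma pottsW2_eq_isingWeight (τ : V → Fin 2) :
    pottsW2 G β J h τ = isingWeight G β J h (fun v => pottsStateEquiv (τ v)) := by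
  have hfield (a : Fin 2) : ((if a = 0 then (1 : ℝ) else 0) - if a = 1 then 1 else 0)
      = spin (pottsStateEquiv a) := by
    fin_cases a <;> simp [spin, pottsStateEquiv]
  rw [pottsW2, isingWeight, ← Real.exp_sum, ← Real.exp_add]
  simp only [hfield, eDelta_pottsStateEquiv, div_mul_eq_mul_div, ← Finset.sum_div,
    ← Finset.mul_sum]
  congr 1
  ring

lemma pottsW2_twoPoint_eq (x y : V) :
    (∑ τ ∈ Finset.univ.filter (fun τ : V → Fin 2 => τ x = τ y), pottsW2 G β J h τ)
        / (∑ τ : V → Fin 2, pottsW2 G β J h τ) - 1 / 2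
      = (∑ σ, spin (σ x) * spin (σ y) * isingWeight G β J h σ)
          / (2 * ∑ σ, isingWeight G β J h σ) := by
  let e : (V → Fin 2) ≃ (V → Bool) := Equiv.arrowCongr (Equiv.refl V) pottsStateEquiv
  have hZ : ∑ τ, pottsW2 G β J h τ = ∑ σ, isingWeight G β J h σ :=
    Fintype.sum_equiv e _ _ (pottsW2_eq_isingWeight G β J h)
  have hN : ∑ τ ∈ Finset.univ.filter (fun τ : V → Fin 2 => τ x = τ y), pottsW2 G β J h τ
      = ∑ σ ∈ Finset.univ.filter (fun σ : V → Bool => σ x = σ y), isingWeight G β J h σ :=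
    Finset.sum_equiv e (fun τ => by simp [e, pottsStateEquiv.injective.eq_iff])
      (fun τ _ => pottsW2_eq_isingWeight G β J h τ)
  have hind (σ : V → Bool) : (if σ x = σ y then isingWeight G β J h σ else 0)
      = (isingWeight G β J h σ + spin (σ x) * spin (σ y) * isingWeight G β J h σ) / 2 := by
    cases σ x <;> cases σ y <;> norm_num [spin]
  have hpos : 0 < ∑ σ, isingWeight G β J h σ :=
    Finset.sum_pos (fun σ _ => isingWeight_pos G β J h σ) Finset.univ_nonempty
  rw [hZ, hN, Finset.sum_filter]
  simp only [hind, ← Finset.sum_div, Finset.sum_add_distrib]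
  field_simp
  ring

end Potts

open scoped Classical in
theorem statement8_general [Fintype V] [DecidableEq V]
    (G : SimpleGraph V) [DecidableRel G.Adj]
    (β : ℝ)
    (J : Sym2 V → ℝ)
    (h : V → ℝ)
    (p : Sym2 V → ℝ) (hp : ∀ e, p e = 1 - Real.exp (-(2 * β) * J e))
    (x y : V) :
    (∑ τ ∈ Finset.univ.filter (fun τ : V → Fin 2 => τ x = τ y),
          pottsW2 G β J h τ) / (∑ τ : V → Fin 2, pottsW2 G β J h τ) - 1 / 2
      = 1 / 2 * rcE G β p h
            (fun F => if (openSub G F).Reachable x y then 1 else 0)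
        + 1 / 2 * rcE G β p h
            (fun F => (if ¬ (openSub G F).Reachable x y then 1 else 0) *
              Real.tanh (hK G β h F x) * Real.tanh (hK G β h F y)) := by
  have hC : (∏ e ∈ G.edgeFinset, Real.exp (2 * β * J e)) ≠ 0 :=
    (Finset.prod_pos fun _ _ => Real.exp_pos _).ne'
  have hsplit (F : Finset (Sym2 V)) :
      (if (openSub G F).Reachable x y then 1 else
          Real.tanh (hK G β h F x) * Real.tanh (hK G β h F y)) * rcW G β p h F
        = (if (openSub G F).Reachable x y then 1 else 0) * rcW G β p h F
          + (if ¬ (openSub G F).Reachable x y then 1 else 0) *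
              Real.tanh (hK G β h F x) * Real.tanh (hK G β h F y) * rcW G β p h F := by
    split_ifs <;> ring
  rw [pottsW2_twoPoint_eq, sum_spin_mul_spin_mul_isingWeight_eq G hp,
    sum_isingWeight_eq G hp, mul_left_comm, mul_div_mul_left _ _ hC]
  simp only [rcE, hsplit, Finset.sum_add_distrib]
  ring

open scoped Classical in
/-- Theorem (Correlation-connectivity): the two-point function of the 2-state
Potts model at inverse temperature `2β` in terms of the random-cluster measure. -/
theorem statement8 [Fintype V] [DecidableEq V]
    (G : SimpleGraph V) [DecidableRel G.Adj]
    (β : ℝ) (hβ : 0 < β)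
    (J : Sym2 V → ℝ) (hJ : ∀ e ∈ G.edgeFinset, 0 ≤ J e)
    (h : V → ℝ)
    (p : Sym2 V → ℝ) (hp : ∀ e, p e = 1 - Real.exp (-(2 * β) * J e))
    (x y : V) (hxy : x ≠ y) :
    (∑ τ ∈ Finset.univ.filter (fun τ : V → Fin 2 => τ x = τ y),
          pottsW2 G β J h τ) / (∑ τ : V → Fin 2, pottsW2 G β J h τ) - 1 / 2
      = 1 / 2 * rcE G β p h
            (fun F => if (openSub G F).Reachable x y then 1 else 0)
        + 1 / 2 * rcE G β p h
            (fun F => (if ¬ (openSub G F).Reachable x y then 1 else 0) *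
              Real.tanh (hK G β h F x) * Real.tanh (hK G β h F y)) :=
  statement8_general G β J h p hp x y

end
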